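/- For a nonzero integer n, define U_n : ℝ \ {0} → ℝ as follows: if n > 0, U_n(q) = q^(4n) + V(q)·P_n(q), and if n < 0, U_n(q) = U_{−n}(q⁻¹), where V(q) = −q⁹ + q⁷ − q⁵ + q³ + q + q⁻¹ + q⁻³ − q⁻⁵ + q⁻⁷ − q⁻⁹ and P_m(q) = ∑_{k=1}^{m} (q^(4k−3) − q^(4k−1)) for m ≥ 1. Then for every nonzero integer n, the third (real) derivative of U_n at q = 1 equals 576n, and in particular U_n‴(1) ≠ 0. -/

import Mathlib

/-- The Jones polynomial of the pretzel link `P(3,−2,2,−3)`. -/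
noncomputable def pretzelV : ℝ → ℝ := fun q =>
  -q ^ 9 + q ^ 7 - q ^ 5 + q ^ 3 + q + q⁻¹ + (q⁻¹) ^ 3 - (q⁻¹) ^ 5 + (q⁻¹) ^ 7 - (q⁻¹) ^ 9

/-- `Pₘ(q) = ∑_{k=1}^{m} (q^(4k−3) − q^(4k−1))`. -/
noncomputable def Pfun (m : ℕ) : ℝ → ℝ := fun q =>
  ∑ k ∈ Finset.Icc 1 m, (q ^ (4 * k - 3) - q ^ (4 * k - 1))

/-- The Jones polynomial of `KT_{2,n}` for a nonzero integer `n`: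
for `n > 0` it is `q^(4n) + V(q)·Pₙ(q)`, and for `n < 0` it is `U_{−n}(q⁻¹)`
(the value for `n = 0` is irrelevant and set to `1`). -/
noncomputable def Ufun (n : ℤ) : ℝ → ℝ := fun q =>
  if 0 < n then q ^ (4 * n) + pretzelV q * Pfun n.toNat q
  else if n < 0 then
    q⁻¹ ^ (4 * (-n)) + pretzelV q⁻¹ * Pfun (-n).toNat q⁻¹
  else 1

open Finset Topology

/-!
Telescoping gives `(1 + q²) Pₘ(q) = q (1 − q^(4m))`, and `1 + q²` divides `q V(q)` with a palindromic
Laurent polynomial `W` as quotient. Hence `Uₙ = W + (1 − W) q^(4n)` for every integer `n` (for `n < 0`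
because `W(q⁻¹) = W(q)`). As `W(1) = 1` and `W'(1) = 0`, the Leibniz rule leaves
`Uₙ‴(1) = −3 W''(1) · 4n`, and `W''(1) = −48`.
-/

section

variable {𝕜 : Type*} [NontriviallyNormedField 𝕜]

theorem contDiffAt_zpow (m : ℤ) {x : 𝕜} (hx : x ≠ 0) (n : WithTop ℕ∞) :
    ContDiffAt 𝕜 n (fun y => y ^ m) x := by
  cases m with
  | ofNat k => simp only [Int.ofNat_eq_natCast, zpow_natCast]; fun_prop
  | negSucc k => simp only [zpow_negSucc]; fun_prop (disch := exact pow_ne_zero _ hx)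

theorem iteratedDeriv_zpow_one (m : ℤ) (k : ℕ) :
    iteratedDeriv k (fun x : 𝕜 => x ^ m) 1 = ∏ i ∈ range k, ((m : 𝕜) - i) := by
  rw [iteratedDeriv_eq_iterate, iter_deriv_zpow, one_zpow, mul_one]

theorem iteratedDeriv_sum_mul_zpow_one {ι : Type*} (s : Finset ι) (c : ι → 𝕜) (e : ι → ℤ)
    (k : ℕ) :
    iteratedDeriv k (fun x => ∑ i ∈ s, c i * x ^ e i) 1 =
      ∑ i ∈ s, c i * ∏ j ∈ range k, ((e i : 𝕜) - j) := by
  rw [iteratedDeriv_fun_sum fun i _ => contDiffAt_const.mul (contDiffAt_zpow (e i) one_ne_zero k)]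
  simp only [iteratedDeriv_const_mul_field, iteratedDeriv_zpow_one]

theorem iteratedDeriv_three_mul_of_eq_zero_of_deriv_eq_zero {f g : 𝕜 → 𝕜} {x : 𝕜}
    (hf : ContDiffAt 𝕜 3 f x) (hg : ContDiffAt 𝕜 3 g x) (hf₀ : f x = 0) (hf₁ : deriv f x = 0) :
    iteratedDeriv 3 (fun y => f y * g y) x =
      3 * iteratedDeriv 2 f x * deriv g x + iteratedDeriv 3 f x * g x := by
  rw [iteratedDeriv_fun_mul hf hg]
  simp [sum_range_succ, iteratedDeriv_one, hf₀, hf₁, Nat.choose]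

end

theorem one_add_sq_mul_Pfun (m : ℕ) (q : ℝ) : (1 + q ^ 2) * Pfun m q = q * (1 - q ^ (4 * m)) := by
  induction m with
  | zero => simp [Pfun]
  | succ k ih =>
    rw [Pfun, sum_Icc_succ_top (by omega), mul_add, ← Pfun, ih,
      show 4 * (k + 1) - 3 = 4 * k + 1 by omega, show 4 * (k + 1) - 1 = 4 * k + 3 by omega]
    ring

/-- `q V(q) / (1 + q²)`, a Laurent polynomial because `V(±i) = 0`. -/
noncomputable def pretzelW : ℝ → ℝ := fun q =>
  -q ^ 8 + 2 * q ^ 6 - 3 * q ^ 4 + 4 * q ^ 2 - 3 + 4 * (q⁻¹) ^ 2 - 3 * (q⁻¹) ^ 4 + 2 * (q⁻¹) ^ 6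
    - (q⁻¹) ^ 8

theorem pretzelW_eq_sum : pretzelW = fun q =>
    ∑ i : Fin 9, (![-1, 2, -3, 4, -3, 4, -3, 2, -1] : Fin 9 → ℝ) i * q ^ (8 - 2 * (i : ℤ)) := by
  funext q
  norm_num [pretzelW, Fin.sum_univ_succ, zpow_neg]
  ring

theorem pretzelV_mul_eq_one_add_sq_mul_pretzelW {q : ℝ} (hq : q ≠ 0) :
    pretzelV q * q = (1 + q ^ 2) * pretzelW q := by
  unfold pretzelV pretzelW
  field_simp
  ring

theorem pretzelW_inv (q : ℝ) : pretzelW q⁻¹ = pretzelW q := by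
  unfold pretzelW
  rw [inv_inv]
  ring

theorem pretzelW_one : pretzelW 1 = 1 := by
  norm_num [pretzelW]

theorem deriv_pretzelW_one : deriv pretzelW 1 = 0 := by
  rw [← iteratedDeriv_one, pretzelW_eq_sum, iteratedDeriv_sum_mul_zpow_one]
  norm_num [Fin.sum_univ_succ]

theorem iteratedDeriv_two_pretzelW_one : iteratedDeriv 2 pretzelW 1 = -48 := by
  rw [pretzelW_eq_sum, iteratedDeriv_sum_mul_zpow_one]
  norm_num [Fin.sum_univ_succ]

theorem pretzelV_mul_Pfun (m : ℕ) {q : ℝ} (hq : q ≠ 0) :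
    pretzelV q * Pfun m q = pretzelW q * (1 - q ^ (4 * m)) := by
  refine mul_left_cancel₀ (by positivity : (1 + q ^ 2 : ℝ) ≠ 0) ?_
  calc (1 + q ^ 2) * (pretzelV q * Pfun m q)
      _ = pretzelV q * q * (1 - q ^ (4 * m)) := by
        rw [mul_left_comm, one_add_sq_mul_Pfun, mul_assoc]
      _ = (1 + q ^ 2) * (pretzelW q * (1 - q ^ (4 * m))) := by
        rw [pretzelV_mul_eq_one_add_sq_mul_pretzelW hq]; ring

theorem Ufun_eq (n : ℤ) {q : ℝ} (hq : q ≠ 0) :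
    Ufun n q = pretzelW q + (1 - pretzelW q) * q ^ (4 * n) := by
  rcases lt_trichotomy n 0 with hn | rfl | hn
  · have hm : (((-n).toNat : ℕ) : ℤ) = -n := Int.toNat_of_nonneg (by omega)
    have hinv : q⁻¹ ^ (4 * -n) = q ^ (4 * n) := by rw [inv_zpow', mul_neg, neg_neg]
    simp only [Ufun, if_neg (by omega : ¬ 0 < n), if_pos hn, pretzelV_mul_Pfun _ (inv_ne_zero hq),
      pretzelW_inv, ← zpow_natCast, Nat.cast_mul, Nat.cast_ofNat, hm, hinv]
    ring
  · simp [Ufun]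
  · have hm : ((n.toNat : ℕ) : ℤ) = n := Int.toNat_of_nonneg hn.le
    simp only [Ufun, if_pos hn, pretzelV_mul_Pfun _ hq, ← zpow_natCast, Nat.cast_mul,
      Nat.cast_ofNat, hm]
    ring

theorem iteratedDeriv_three_Ufun_one (n : ℤ) : iteratedDeriv 3 (Ufun n) 1 = 576 * n := by
  have hU : Ufun n =ᶠ[𝓝 1] fun q => pretzelW q + (1 - pretzelW q) * q ^ (4 * n) :=
    (eventually_ne_nhds one_ne_zero).mono fun q hq => Ufun_eq n hq
  have hW : ContDiffAt ℝ 3 pretzelW 1 := by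
    rw [pretzelW_eq_sum]
    exact .sum fun i _ => contDiffAt_const.mul (contDiffAt_zpow _ one_ne_zero 3)
  have hh : ContDiffAt ℝ 3 (fun q : ℝ => q ^ (4 * n)) 1 := contDiffAt_zpow _ one_ne_zero 3
  rw [hU.iteratedDeriv_eq, iteratedDeriv_fun_add hW ((contDiffAt_const.sub hW).mul hh),
    iteratedDeriv_three_mul_of_eq_zero_of_deriv_eq_zero (contDiffAt_const.sub hW) hh
      (by rw [pretzelW_one, sub_self]) (by rw [deriv_const_sub, deriv_pretzelW_one, neg_zero]),
    iteratedDeriv_const_sub (by norm_num), iteratedDeriv_const_sub (by norm_num)]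
  simp only [iteratedDeriv_neg, iteratedDeriv_two_pretzelW_one, deriv_zpow, one_zpow]
  push_cast
  ring

/-- For every nonzero integer `n`, `Uₙ‴(1) = 576n ≠ 0`. -/
theorem Ufun_third_deriv_at_one (n : ℤ) (hn : n ≠ 0) :
    iteratedDeriv 3 (Ufun n) 1 = 576 * n ∧ iteratedDeriv 3 (Ufun n) 1 ≠ 0 := by
  rw [iteratedDeriv_three_Ufun_one]
  exact ⟨rfl, mul_ne_zero (by norm_num) (Int.cast_ne_zero.mpr hn)⟩
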